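/- arXiv:2003.03840 — 3 statements merged into one kernel-verified Lean document; each statement's English description precedes it below -/
import Mathlib

section
/- Let L be a well-rounded lattice in ℝⁿ possessing a nearly orthogonal basis, and let x₁,…,xₙ be any n linearly independent vectors in S(L). Then x₁,…,xₙ form a basis of L, i.e., span_ℤ{x₁,…,xₙ} = L. -/
open scoped RealInnerProductSpace
open Submodule Metric MeasureTheory

noncomputable section

abbrev Evec (n : ℕ) := EuclideanSpace ℝ (Fin n)

/-- The lattice generated (over ℤ) by the vectors `b 0, …, b (n-1)`. -/
def latticeOf {n : ℕ} (b : Fin n → Evec n) : Set (Evec n) :=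
  {x | ∃ c : Fin n → ℤ, x = ∑ i, (c i : ℝ) • b i}

/-- The set of minimal vectors `S(L)` of a lattice `L`. -/
def minVecs {n : ℕ} (L : Set (Evec n)) : Set (Evec n) :=
  {x | x ∈ L ∧ x ≠ 0 ∧ ∀ y ∈ L, y ≠ 0 → ‖x‖ ≤ ‖y‖}

/-- `L` is well-rounded: its minimal vectors span `ℝⁿ`. -/
def IsWellRounded {n : ℕ} (L : Set (Evec n)) : Prop :=
  Submodule.span ℝ (minVecs L) = ⊤

/-- `L` has minimal norm `m`. -/
def hasMinNorm {n : ℕ} (L : Set (Evec n)) (m : ℝ) : Prop :=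
  (∃ x ∈ L, x ≠ 0 ∧ ‖x‖ = m) ∧ ∀ x ∈ L, x ≠ 0 → m ≤ ‖x‖

/-- The angle in `[0, π/2]` between a vector `v` and a subspace `V`,
whose cosine is `‖proj_V v‖ / ‖v‖`. -/
def subAngle {n : ℕ} (v : Evec n) (V : Submodule ℝ (Evec n)) : ℝ :=
  Real.arccos (‖(orthogonalProjection V v : Evec n)‖ / ‖v‖)

/-- The ordered basis `b` is weakly θ-orthogonal. -/
def WeaklyOrth {n : ℕ} (θ : ℝ) (b : Fin n → Evec n) : Prop :=
  ∀ i : Fin n, 0 < (i : ℕ) →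
    θ ≤ subAngle (b i) (Submodule.span ℝ (b '' {j | j < i}))

/-- The basis `b` is θ-orthogonal: every ordering of it is weakly θ-orthogonal. -/
def Orth {n : ℕ} (θ : ℝ) (b : Fin n → Evec n) : Prop :=
  ∀ σ : Equiv.Perm (Fin n), WeaklyOrth θ (b ∘ σ)

/-- A nearly orthogonal basis is a π/3-orthogonal basis. -/
def NearlyOrth {n : ℕ} (b : Fin n → Evec n) : Prop := Orth (Real.pi / 3) b

/-- A weakly nearly orthogonal basis is a weakly π/3-orthogonal basis. -/
def WeaklyNearlyOrth {n : ℕ} (b : Fin n → Evec n) : Prop := WeaklyOrth (Real.pi / 3) b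

/-- Coherence `C(L)` of a lattice. -/
def coherence {n : ℕ} (L : Set (Evec n)) : ℝ :=
  sSup {t | ∃ x ∈ minVecs L, ∃ y ∈ minVecs L, x ≠ y ∧ x ≠ -y ∧
    t = abs ⟪x, y⟫ / (‖x‖ * ‖y‖)}

/-- `μ(B)`: minimal absolute cosine of angles between distinct basis vectors. -/
def muB {n : ℕ} (b : Fin n → Evec n) : ℝ :=
  sInf {t | ∃ i j : Fin n, i ≠ j ∧ t = abs ⟪b i, b j⟫ / (‖b i‖ * ‖b j‖)}

/-- `ν(B)`: maximal absolute cosine of angles between distinct basis vectors. -/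
def nuB {n : ℕ} (b : Fin n → Evec n) : ℝ :=
  sSup {t | ∃ i j : Fin n, i ≠ j ∧ t = abs ⟪b i, b j⟫ / (‖b i‖ * ‖b j‖)}

/-- The determinant of the lattice with basis `b`. -/
def latDet {n : ℕ} (b : Fin n → Evec n) : ℝ :=
  |(Matrix.of fun i j : Fin n => b j i).det|

/-- Packing density of a lattice with basis `b` and minimal norm `m`:
`ω_n · m^n / (2^n · det L)`. -/
def packDensity {n : ℕ} (m : ℝ) (b : Fin n → Evec n) : ℝ :=
  (volume (ball (0 : Evec n) 1)).toReal * m ^ n / (2 ^ n * latDet b)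

/-- `L` is strongly eutactic. -/
def StronglyEutactic {n : ℕ} (L : Set (Evec n)) : Prop :=
  ∃ c : ℝ, 0 < c ∧ ∀ v : Evec n, ‖v‖ ^ 2 = c * ∑ᶠ x ∈ minVecs L, ⟪v, x⟫ ^ 2

/-- `L` is perfect: `{x xᵀ : x ∈ S(L)}` spans the symmetric `n × n` matrices. -/
def IsPerfect {n : ℕ} (L : Set (Evec n)) : Prop :=
  ∀ A : Matrix (Fin n) (Fin n) ℝ, A.IsSymm →
    A ∈ Submodule.span ℝ ((fun x : Evec n => Matrix.of fun i j => x i * x j) '' minVecs L)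

end

/-!
Near orthogonality gives `|⟪bᵢ, w⟫| ≤ ‖bᵢ‖ ‖w‖ / 2` for every `w` in the span of the other
basis vectors. Writing a minimal vector `x = ∑ cᵢ bᵢ` of norm `m`, this forces `cᵢ ∈ {0, ±1}` and
`cᵢ ⟪x, bᵢ⟫ ≥ m² / 2` whenever `cᵢ ≠ 0`; as these terms add up to `m²`, at most two coordinates
are nonzero. If `cᵢ, cⱼ ≠ 0`, then `bᵢ` and `cᵢ x - bᵢ = ± bⱼ` both have norm `m` and make an
angle of `2π/3`; applying the angle bound at `bᵢ` to the sum of two such vectors shows that two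
minimal vectors with two-term supports through the same index `i` are proportional. So among `n`
independent minimal vectors the two-term supports are disjoint, and since the `xₜ` span, each pair
`{i, j}` is accompanied by a minimal vector `± bᵢ` or `± bⱼ`. Hence every `bᵢ` is an integer
combination of the `xₜ`.
-/

open scoped Finset

section InnerProduct

variable {E : Type*} [NormedAddCommGroup E] [InnerProductSpace ℝ E]

theorem abs_inner_le_of_norm_orthogonalProjection_le {V : Submodule ℝ E}
    [V.HasOrthogonalProjection] {v w : E} {r : ℝ} (h : ‖V.orthogonalProjectionOnto v‖ ≤ r)
    (hw : w ∈ V) : |⟪v, w⟫| ≤ r * ‖w‖ := by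
  have hvw : ⟪v, w⟫ = ⟪(V.orthogonalProjectionOnto v : E), w⟫ := by
    rw [← starProjection_apply, ← sub_eq_zero, ← inner_sub_left]
    exact V.starProjection_inner_eq_zero v w hw
  rw [hvw]
  exact (abs_real_inner_le_norm _ _).trans (mul_le_mul_of_nonneg_right h (norm_nonneg w))

theorem three_quarters_mul_le_norm_smul_add_sq {b w : E} (h : |⟪b, w⟫| ≤ ‖b‖ / 2 * ‖w‖)
    (γ : ℝ) : 3 / 4 * (γ ^ 2 * ‖b‖ ^ 2) ≤ ‖γ • b + w‖ ^ 2 := by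
  have hexp : ‖γ • b + w‖ ^ 2 = γ ^ 2 * ‖b‖ ^ 2 + 2 * (γ * ⟪b, w⟫) + ‖w‖ ^ 2 := by
    rw [norm_add_sq_real, norm_smul, real_inner_smul_left, mul_pow, Real.norm_eq_abs, sq_abs]
  have hcross : -(|γ| * (‖b‖ / 2 * ‖w‖)) ≤ γ * ⟪b, w⟫ := by
    have := abs_le.1 ((abs_mul γ ⟪b, w⟫).trans_le (mul_le_mul_of_nonneg_left h (abs_nonneg γ)))
    linarith [this.1]
  nlinarith [sq_nonneg (‖w‖ - |γ| * ‖b‖ / 2), sq_abs γ]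

theorem half_norm_sq_le_inner_add_left {b w : E} (h : |⟪b, w⟫| ≤ ‖b‖ / 2 * ‖w‖)
    (hle : ‖b + w‖ ≤ ‖b‖) : ‖b + w‖ ^ 2 / 2 ≤ ⟪b + w, b⟫ := by
  -- `t = -⟪b, w⟫` satisfies `t² ≤ ‖b‖² ‖w‖² / 4 ≤ ‖b‖² t / 2`, hence `t ≤ ‖b‖² / 2`
  have hs : ⟪b + w, b⟫ = ‖b‖ ^ 2 + ⟪b, w⟫ := by
    rw [inner_add_left, real_inner_self_eq_norm_sq, real_inner_comm]
  have hw : ‖w‖ ^ 2 = ‖b + w‖ ^ 2 - 2 * ⟪b, w⟫ - ‖b‖ ^ 2 := by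
    rw [norm_add_sq_real]; ring
  have hsq : ⟪b, w⟫ ^ 2 ≤ ‖b‖ ^ 2 / 4 * ‖w‖ ^ 2 := by
    have := sq_le_sq' (abs_le.1 h).1 (abs_le.1 h).2
    linarith [show (‖b‖ / 2 * ‖w‖) ^ 2 = ‖b‖ ^ 2 / 4 * ‖w‖ ^ 2 by ring]
  have hm : ‖b + w‖ ^ 2 ≤ ‖b‖ ^ 2 := pow_le_pow_left₀ (norm_nonneg _) hle 2
  rw [hs]
  nlinarith

theorem norm_eq_and_inner_eq_of_norm_add_le {p q : E} (h : |⟪p, q⟫| ≤ ‖p‖ / 2 * ‖q‖)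
    (hp : ‖p + q‖ ≤ ‖p‖) (hq : ‖p + q‖ ≤ ‖q‖) :
    ‖p‖ = ‖p + q‖ ∧ ‖q‖ = ‖p + q‖ ∧ ⟪p, q⟫ = -(‖p + q‖ ^ 2 / 2) := by
  have hexp := norm_add_sq_real p q
  have h1 := abs_le.1 h
  have hm := norm_nonneg (p + q)
  have hpq : ‖p‖ * ‖q‖ = ‖p + q‖ ^ 2 := by
    nlinarith [sq_nonneg (‖p‖ - ‖q‖), mul_le_mul hp hq hm (norm_nonneg p)]
  have hpeq : ‖p‖ = ‖q‖ := by nlinarith [sq_nonneg (‖p‖ - ‖q‖)]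
  refine ⟨?_, ?_, by nlinarith⟩ <;> nlinarith [norm_nonneg p, norm_nonneg q]

theorem eq_of_inner_eq_neg_half {p q r : E} (hq : ‖q‖ = ‖p‖) (hr : ‖r‖ = ‖p‖)
    (hpq : ⟪p, q⟫ = -(‖p‖ ^ 2 / 2)) (hpr : ⟪p, r⟫ = -(‖p‖ ^ 2 / 2))
    (h : |⟪p, q + r⟫| ≤ ‖p‖ / 2 * ‖q + r‖) : q = r := by
  -- `⟪p, q + r⟫ = -‖p‖²` forces `‖q + r‖ ≥ 2 ‖p‖`, and the parallelogram law then `‖q - r‖ = 0`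
  have hsum : ⟪p, q + r⟫ = -‖p‖ ^ 2 := by rw [inner_add_right, hpq, hpr]; ring
  rw [hsum, abs_neg, abs_of_nonneg (sq_nonneg _)] at h
  have hpar := parallelogram_law_with_norm ℝ q r
  rw [hq, hr] at hpar
  have hm : ‖p‖ ^ 2 * ‖q - r‖ ^ 2 ≤ 0 := by
    nlinarith [mul_le_mul h h (sq_nonneg _) (by positivity), norm_nonneg p]
  rcases (norm_nonneg p).eq_or_lt with hp | hp
  · rw [← hp, norm_eq_zero] at hq hr
    rw [hq, hr]
  · by_contra hne
    have hqr := norm_pos_iff.2 (sub_ne_zero.2 hne)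
    linarith [mul_pos (pow_pos hp 2) (pow_pos hqr 2)]

end InnerProduct

section NearlyOrthogonal

variable {n : ℕ}

theorem norm_orthogonalProjection_le_half_of_le_subAngle {v : Evec n}
    {V : Submodule ℝ (Evec n)} (h : Real.pi / 3 ≤ subAngle v V) :
    ‖V.orthogonalProjectionOnto v‖ ≤ ‖v‖ / 2 := by
  rcases eq_or_ne v 0 with rfl | hv0
  · simp
  have hv : 0 < ‖v‖ := norm_pos_iff.2 hv0
  have hr0 : 0 ≤ ‖V.orthogonalProjectionOnto v‖ / ‖v‖ := by positivity
  have hr1 : ‖V.orthogonalProjectionOnto v‖ / ‖v‖ ≤ 1 :=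
    (div_le_one hv).2 (V.norm_orthogonalProjectionOnto_apply_le v)
  have hcos : Real.cos (Real.arccos (‖V.orthogonalProjectionOnto v‖ / ‖v‖)) ≤
      Real.cos (Real.pi / 3) :=
    Real.cos_le_cos_of_nonneg_of_le_pi (by positivity) (Real.arccos_le_pi _) h
  rw [Real.cos_arccos (by linarith) hr1, Real.cos_pi_div_three, div_le_iff₀ hv] at hcos
  linarith

theorem Orth.le_subAngle_span_ne {θ : ℝ} {b : Fin n → Evec n} (h : Orth θ b) (hn : 2 ≤ n)
    (i : Fin n) : θ ≤ subAngle (b i) (span ℝ (b '' {k | k ≠ i})) := by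
  obtain ⟨m, rfl⟩ : ∃ m, n = m + 1 := ⟨n - 1, by omega⟩
  set σ := Equiv.swap (Fin.last m) i
  have hlast : {j | j < Fin.last m} = {Fin.last m}ᶜ := by
    ext j; exact Fin.lt_last_iff_ne_last
  have himg : (b ∘ σ) '' {j | j < Fin.last m} = b '' {k | k ≠ i} := by
    rw [Set.image_comp, hlast, Set.image_compl_eq σ.bijective, Set.image_singleton,
      Equiv.swap_apply_left]
    rfl
  have := h σ (Fin.last m) (by simp; omega)
  rwa [himg, Function.comp_apply, Equiv.swap_apply_left] at this

theorem NearlyOrth.abs_inner_le {b : Fin n → Evec n} (hNO : NearlyOrth b) (i : Fin n)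
    {w : Evec n} (hw : w ∈ span ℝ (b '' {k | k ≠ i})) : |⟪b i, w⟫| ≤ ‖b i‖ / 2 * ‖w‖ := by
  rcases lt_or_ge n 2 with hn | hn
  · have : {k | k ≠ i} = (∅ : Set (Fin n)) :=
      Set.eq_empty_of_forall_notMem fun k hk => hk (Fin.ext (by omega))
    rw [this, Set.image_empty, span_empty, mem_bot] at hw
    simp [hw]
  · exact abs_inner_le_of_norm_orthogonalProjection_le
      (norm_orthogonalProjection_le_half_of_le_subAngle (hNO.le_subAngle_span_ne hn i)) hw

end NearlyOrthogonal

section Coefficients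

variable {ι R M : Type*} [Fintype ι] [DecidableEq ι] [Ring R] [AddCommGroup M] [Module R M]

theorem sum_smul_sub_smul_mem_span_ne (a : ι → R) (b : ι → M) (i : ι) :
    ∑ k, a k • b k - a i • b i ∈ span R (b '' {k | k ≠ i}) := by
  rw [← Finset.sum_erase_eq_sub (Finset.mem_univ i)]
  exact sum_mem fun k hk => smul_mem _ _ (subset_span ⟨k, Finset.ne_of_mem_erase hk, rfl⟩)

theorem smul_sum_smul_sub_mem_span_ne {a : ι → R} (b : ι → M) {i : ι} (ha : a i * a i = 1) :
    a i • ∑ k, a k • b k - b i ∈ span R (b '' {k | k ≠ i}) := by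
  have : a i • ∑ k, a k • b k - b i = a i • (∑ k, a k • b k - a i • b i) := by
    rw [smul_sub, smul_smul, ha, one_smul]
  rw [this]
  exact smul_mem _ _ (sum_smul_sub_smul_mem_span_ne a b i)

theorem sum_intCast_smul_eq_add {c : ι → ℤ} (b : ι → M) (h : #{k | c k ≠ 0} ≤ 2) {i j : ι}
    (hij : i ≠ j) (hi : c i ≠ 0) (hj : c j ≠ 0) :
    ∑ k, (c k : R) • b k = (c i : R) • b i + (c j : R) • b j := by
  have hsupp : ({i, j} : Finset ι) = ({k | c k ≠ 0} : Finset ι) := by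
    refine Finset.eq_of_subset_of_card_le ?_ (h.trans (Finset.card_pair hij).ge)
    intro k hk
    rcases Finset.mem_insert.1 hk with rfl | hk
    · simpa using hi
    · rw [Finset.mem_singleton.1 hk]; simpa using hj
  rw [← Finset.sum_filter_of_ne (p := fun k => c k ≠ 0) fun k _ hk hck => by simp [hck] at hk,
    ← hsupp, Finset.sum_pair hij]

end Coefficients

section MinimalVectors

variable {n : ℕ} {b : Fin n → Evec n} {v : Evec n} {c : Fin n → ℤ} {i : Fin n}

theorem NearlyOrth.abs_coeff_le_one (hNO : NearlyOrth b) (hv : v = ∑ k, (c k : ℝ) • b k)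
    (hv0 : v ≠ 0) (hmin : ‖v‖ ≤ ‖b i‖) : |c i| ≤ 1 := by
  have hw := hNO.abs_inner_le i (sum_smul_sub_smul_mem_span_ne (fun k => (c k : ℝ)) b i)
  have h34 := three_quarters_mul_le_norm_smul_add_sq hw (c i)
  rw [add_sub_cancel, ← hv] at h34
  have hb : 0 < ‖b i‖ := (norm_pos_iff.2 hv0).trans_le hmin
  have hsq : (c i : ℝ) ^ 2 < 2 ^ 2 := by
    nlinarith [pow_le_pow_left₀ (norm_nonneg v) hmin 2, mul_pos hb hb]
  have : |(c i : ℝ)| < 2 := by simpa using sq_lt_sq.1 hsq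
  have : |c i| < 2 := by exact_mod_cast this
  omega

theorem NearlyOrth.abs_coeff_eq_one (hNO : NearlyOrth b) (hv : v = ∑ k, (c k : ℝ) • b k)
    (hv0 : v ≠ 0) (hmin : ‖v‖ ≤ ‖b i‖) (hi : c i ≠ 0) : |(c i : ℝ)| = 1 := by
  exact_mod_cast le_antisymm (hNO.abs_coeff_le_one hv hv0 hmin) (Int.one_le_abs hi)

theorem NearlyOrth.half_norm_sq_le_coeff_mul_inner (hNO : NearlyOrth b)
    (hv : v = ∑ k, (c k : ℝ) • b k) (hv0 : v ≠ 0) (hmin : ‖v‖ ≤ ‖b i‖) (hi : c i ≠ 0) :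
    ‖v‖ ^ 2 / 2 ≤ c i * ⟪v, b i⟫ := by
  have hc := hNO.abs_coeff_eq_one hv hv0 hmin hi
  have hw := hNO.abs_inner_le i (smul_sum_smul_sub_mem_span_ne (a := fun k => (c k : ℝ)) b
    (by rw [← abs_mul_abs_self, hc, one_mul]))
  rw [← hv] at hw
  have hcv : ‖(c i : ℝ) • v‖ = ‖v‖ := by rw [norm_smul, Real.norm_eq_abs, hc, one_mul]
  have := half_norm_sq_le_inner_add_left hw (by rwa [add_sub_cancel, hcv])
  rwa [add_sub_cancel, hcv, real_inner_smul_left] at this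

theorem NearlyOrth.card_support_le_two (hNO : NearlyOrth b) (hv : v = ∑ k, (c k : ℝ) • b k)
    (hv0 : v ≠ 0) (hmin : ∀ k, ‖v‖ ≤ ‖b k‖) : #{k | c k ≠ 0} ≤ 2 := by
  have hsum : ∑ k ∈ {k | c k ≠ 0}, (c k : ℝ) * ⟪v, b k⟫ = ‖v‖ ^ 2 := by
    calc ∑ k ∈ {k | c k ≠ 0}, (c k : ℝ) * ⟪v, b k⟫ = ⟪v, ∑ k, (c k : ℝ) • b k⟫ := by
          rw [Finset.sum_filter_of_ne fun k _ hk hck => by simp [hck] at hk]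
          simp only [inner_sum, real_inner_smul_right]
      _ = ‖v‖ ^ 2 := by rw [← hv, real_inner_self_eq_norm_sq]
  have hle := Finset.card_nsmul_le_sum ({k | c k ≠ 0} : Finset (Fin n)) _ _ fun k hk =>
    hNO.half_norm_sq_le_coeff_mul_inner hv hv0 (hmin k) (Finset.mem_filter.1 hk).2
  rw [hsum, nsmul_eq_mul] at hle
  have hm : 0 < ‖v‖ ^ 2 := by positivity
  have : (#{k | c k ≠ 0} : ℝ) ≤ 2 := by nlinarith
  exact_mod_cast this

theorem NearlyOrth.norm_eq_and_inner_eq_of_pair (hNO : NearlyOrth b)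
    (hv : v = ∑ k, (c k : ℝ) • b k) (hv0 : v ≠ 0) (hmin : ∀ k, ‖v‖ ≤ ‖b k‖) {j : Fin n}
    (hij : i ≠ j) (hi : c i ≠ 0) (hj : c j ≠ 0) :
    ‖b i‖ = ‖v‖ ∧ ‖(c i : ℝ) • v - b i‖ = ‖v‖ ∧ ⟪b i, (c i : ℝ) • v - b i⟫ = -(‖v‖ ^ 2 / 2) := by
  have hci := hNO.abs_coeff_eq_one hv hv0 (hmin i) hi
  have hcj := hNO.abs_coeff_eq_one hv hv0 (hmin j) hj
  have hq : (c i : ℝ) • v - b i = ((c i : ℝ) * c j) • b j := by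
    rw [hv, sum_intCast_smul_eq_add b (hNO.card_support_le_two hv hv0 hmin) hij hi hj,
      smul_add, smul_smul, smul_smul, ← abs_mul_abs_self, hci, one_mul, one_smul,
      add_sub_cancel_left]
  have hqn : ‖(c i : ℝ) • v - b i‖ = ‖b j‖ := by
    rw [hq, norm_smul, Real.norm_eq_abs, abs_mul, hci, hcj, one_mul, one_mul]
  have hpq : b i + ((c i : ℝ) • v - b i) = (c i : ℝ) • v := add_sub_cancel _ _
  have hcv : ‖(c i : ℝ) • v‖ = ‖v‖ := by rw [norm_smul, Real.norm_eq_abs, hci, one_mul]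
  have hqi : |⟪b i, (c i : ℝ) • v - b i⟫| ≤ ‖b i‖ / 2 * ‖(c i : ℝ) • v - b i‖ :=
    hNO.abs_inner_le i (by
    rw [hq]; exact smul_mem _ _ (subset_span ⟨j, hij.symm, rfl⟩))
  obtain ⟨h1, h2, h3⟩ := norm_eq_and_inner_eq_of_norm_add_le hqi
    (by rw [hpq, hcv]; exact hmin i) (by rw [hpq, hcv, hqn]; exact hmin j)
  rw [hpq, hcv] at h1 h2 h3
  exact ⟨h1, h2, h3⟩

theorem NearlyOrth.coeff_smul_eq_of_pair (hNO : NearlyOrth b) {v' : Evec n} {c' : Fin n → ℤ}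
    (hv : v = ∑ k, (c k : ℝ) • b k) (hv' : v' = ∑ k, (c' k : ℝ) • b k) (hv0 : v ≠ 0)
    (hnorm : ‖v'‖ = ‖v‖) (hmin : ∀ k, ‖v‖ ≤ ‖b k‖) {j k : Fin n} (hij : i ≠ j) (hik : i ≠ k)
    (hi : c i ≠ 0) (hj : c j ≠ 0) (hi' : c' i ≠ 0) (hk' : c' k ≠ 0) :
    (c i : ℝ) • v = (c' i : ℝ) • v' := by
  have hv0' : v' ≠ 0 := by rw [← norm_ne_zero_iff, hnorm]; exact norm_ne_zero_iff.2 hv0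
  have hmin' : ∀ l, ‖v'‖ ≤ ‖b l‖ := hnorm ▸ hmin
  obtain ⟨hbi, hq, hpq⟩ := hNO.norm_eq_and_inner_eq_of_pair hv hv0 hmin hij hi hj
  obtain ⟨-, hr, hpr⟩ := hNO.norm_eq_and_inner_eq_of_pair hv' hv0' hmin' hik hi' hk'
  have hmem : ∀ {u : Evec n} {a : Fin n → ℤ}, u = ∑ l, (a l : ℝ) • b l → |(a i : ℝ)| = 1 →
      (a i : ℝ) • u - b i ∈ span ℝ (b '' {l | l ≠ i}) := by
    rintro u a rfl ha
    exact smul_sum_smul_sub_mem_span_ne (a := fun l => (a l : ℝ)) b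
      (by rw [← abs_mul_abs_self, ha, one_mul])
  rw [hnorm, ← hbi] at hr hpr
  rw [← hbi] at hq hpq
  have := eq_of_inner_eq_neg_half hq hr hpq hpr (hNO.abs_inner_le i (add_mem
    (hmem hv (hNO.abs_coeff_eq_one hv hv0 (hmin i) hi))
    (hmem hv' (hNO.abs_coeff_eq_one hv' hv0' (hmin' i) hi'))))
  exact sub_left_injective this

end MinimalVectors

section IntegerCoefficients

variable {ι κ E : Type*} [Fintype ι] [AddCommGroup E] [Module ℝ E] (B : Module.Basis ι ℝ E)
  {x : κ → E} {c : κ → ι → ℤ}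

theorem coord_eq_coeff (hc : ∀ t, x t = ∑ i, (c t i : ℝ) • B i) (t : κ) (i : ι) :
    B.coord i (x t) = c t i := by
  rw [hc t, Module.Basis.coord_apply, ← B.equivFun_symm_apply, ← B.equivFun_apply,
    LinearEquiv.apply_symm_apply]

theorem exists_coeff_ne_zero (hc : ∀ t, x t = ∑ i, (c t i : ℝ) • B i)
    (hx : span ℝ (Set.range x) = ⊤) (i : ι) : ∃ t, c t i ≠ 0 := by
  by_contra! h
  have : B.coord i = 0 := LinearMap.ext_on_range hx fun t => by simp [coord_eq_coeff B hc, h]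
  simpa using LinearMap.congr_fun this (B i)

theorem exists_ne_coeff_ne_zero (hc : ∀ t, x t = ∑ i, (c t i : ℝ) • B i)
    (hx : span ℝ (Set.range x) = ⊤) {t : κ} {i j : ι} (hij : i ≠ j) (hj : c t j ≠ 0) :
    ∃ u ≠ t, c u i ≠ 0 ∨ c u j ≠ 0 := by
  by_contra! h
  let f := (c t j : ℝ) • B.coord i - (c t i : ℝ) • B.coord j
  have : f = 0 := LinearMap.ext_on_range hx fun u => by
    by_cases hu : u = t
    · simp [f, coord_eq_coeff B hc, hu, mul_comm]
    · simp [f, coord_eq_coeff B hc, h u hu]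
  simpa [f, hij.symm, hj] using LinearMap.congr_fun this (B i)

theorem basis_mem_span_int_of_coeff_ne_zero (hc : ∀ t, x t = ∑ i, (c t i : ℝ) • B i)
    (habs : ∀ t i, |c t i| ≤ 1) {t : κ} {i : ι} (hi : c t i ≠ 0) (hk : ∀ k ≠ i, c t k = 0) :
    B i ∈ span ℤ (Set.range x) := by
  have hxt : x t = (c t i : ℝ) • B i := by
    rw [hc t]
    exact Finset.sum_eq_single i (fun k _ hki => by simp [hk k hki]) (by simp)
  have hBi : B i = c t i • x t := by
    rw [hxt, ← Int.cast_smul_eq_zsmul ℝ, smul_smul, ← Int.cast_mul, ← abs_mul_abs_self,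
      le_antisymm (habs t i) (Int.one_le_abs hi)]
    simp
  rw [hBi]
  exact zsmul_mem (subset_span (Set.mem_range_self t)) _

theorem basis_mem_span_int [DecidableEq ι] (hc : ∀ t, x t = ∑ i, (c t i : ℝ) • B i)
    (hx : span ℝ (Set.range x) = ⊤) (habs : ∀ t i, |c t i| ≤ 1)
    (htwo : ∀ t, #{i | c t i ≠ 0} ≤ 2)
    (hdisj : ∀ t u i j k, i ≠ j → i ≠ k → c t i ≠ 0 → c t j ≠ 0 → c u i ≠ 0 → c u k ≠ 0 → t = u)
    (i : ι) : B i ∈ span ℤ (Set.range x) := by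
  obtain ⟨t, hti⟩ := exists_coeff_ne_zero B hc hx i
  by_cases hpair : ∃ j ≠ i, c t j ≠ 0
  swap
  · push Not at hpair
    exact basis_mem_span_int_of_coeff_ne_zero B hc habs hti hpair
  obtain ⟨j, hji, htj⟩ := hpair
  -- by `hdisj`, any other row meeting the support `{i, j}` of row `t` has a single nonzero entry
  have hsingle : ∀ l l', l ≠ l' → c t l ≠ 0 → c t l' ≠ 0 → ∀ u ≠ t, c u l ≠ 0 →
      B l ∈ span ℤ (Set.range x) := fun l l' hll' htl htl' u hut hul =>
    basis_mem_span_int_of_coeff_ne_zero B hc habs hul fun k hkl => by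
      by_contra huk
      exact hut (hdisj t u l l' k hll' hkl.symm htl htl' hul huk).symm
  obtain ⟨u, hut, hui | huj⟩ := exists_ne_coeff_ne_zero B hc hx hji.symm htj
  · exact hsingle i j hji.symm hti htj u hut hui
  · have hBj := hsingle j i hji htj hti u hut huj
    have hcc : (c t i : ℝ) * c t i = 1 := by
      rw [← abs_mul_abs_self, ← Int.cast_abs, le_antisymm (habs t i) (Int.one_le_abs hti)]
      simp
    have hBi : B i = c t i • x t - (c t i * c t j) • B j := by
      rw [hc t, sum_intCast_smul_eq_add B (htwo t) hji.symm hti htj, ← Int.cast_smul_eq_zsmul ℝ,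
        ← Int.cast_smul_eq_zsmul ℝ, smul_add, smul_smul, smul_smul, hcc, Int.cast_mul]
      simp
    rw [hBi]
    exact sub_mem (zsmul_mem (subset_span (Set.mem_range_self t)) _) (zsmul_mem hBj _)

theorem span_int_range_eq_of_coeffs [DecidableEq ι] (hc : ∀ t, x t = ∑ i, (c t i : ℝ) • B i)
    (hx : span ℝ (Set.range x) = ⊤) (habs : ∀ t i, |c t i| ≤ 1)
    (htwo : ∀ t, #{i | c t i ≠ 0} ≤ 2)
    (hdisj : ∀ t u i j k, i ≠ j → i ≠ k → c t i ≠ 0 → c t j ≠ 0 → c u i ≠ 0 → c u k ≠ 0 → t = u) :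
    span ℤ (Set.range x) = span ℤ (Set.range B) := by
  refine le_antisymm (span_le.2 ?_) (span_le.2 ?_)
  · rintro _ ⟨t, rfl⟩
    rw [hc t]
    exact sum_mem fun i _ => by
      rw [Int.cast_smul_eq_zsmul]; exact zsmul_mem (subset_span (Set.mem_range_self i)) _
  · rintro _ ⟨i, rfl⟩
    exact basis_mem_span_int B hc hx habs htwo hdisj i

end IntegerCoefficients

theorem latticeOf_eq_span {n : ℕ} (b : Fin n → Evec n) :
    latticeOf b = (span ℤ (Set.range b) : Set (Evec n)) := by
  ext v
  simp only [latticeOf, Set.mem_ofPred_eq, SetLike.mem_coe, mem_span_range_iff_exists_fun,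
    Int.cast_smul_eq_zsmul, eq_comm]

theorem norm_eq_of_mem_minVecs {n : ℕ} {L : Set (Evec n)} {v w : Evec n} (hv : v ∈ minVecs L)
    (hw : w ∈ minVecs L) : ‖v‖ = ‖w‖ :=
  le_antisymm (hv.2.2 w hw.1 hw.2.1) (hw.2.2 v hv.1 hv.2.1)

theorem stmt_15_general {n : ℕ} (b : Fin n → Evec n) (hb : LinearIndependent ℝ b)
    (hNO : NearlyOrth b) (x : Fin n → Evec n) (hx : ∀ i, x i ∈ minVecs (latticeOf b))
    (hxli : LinearIndependent ℝ x) :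
    latticeOf x = latticeOf b := by
  classical
  have hcard : Fintype.card (Fin n) = Module.finrank ℝ (Evec n) := by simp
  obtain ⟨B, rfl⟩ : ∃ B : Module.Basis (Fin n) ℝ (Evec n), ⇑B = b :=
    ⟨_, Module.Basis.coe_mk hb (hb.span_eq_top_of_card_eq_finrank' hcard).ge⟩
  choose c hc using fun t => (hx t).1
  have hx0 : ∀ t, x t ≠ 0 := fun t => (hx t).2.1
  have hmin : ∀ t k, ‖x t‖ ≤ ‖B k‖ := fun t k => (hx t).2.2 _
    (by rw [latticeOf_eq_span]; exact subset_span (Set.mem_range_self k)) (B.ne_zero k)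
  rw [latticeOf_eq_span, latticeOf_eq_span,
    span_int_range_eq_of_coeffs B hc (hxli.span_eq_top_of_card_eq_finrank' hcard)
      (fun t i => hNO.abs_coeff_le_one (hc t) (hx0 t) (hmin t i))
      (fun t => hNO.card_support_le_two (hc t) (hx0 t) (hmin t))
      fun t u i j k hij hik hti htj hui huk =>
        hxli.eq_of_smul_apply_eq_smul_apply _ _ t u (Int.cast_ne_zero.2 hti)
          (hNO.coeff_smul_eq_of_pair (hc t) (hc u) (hx0 t) (norm_eq_of_mem_minVecs (hx u) (hx t))
            (hmin t) hij hik hti htj hui huk)]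

/-- any `n` linearly independent minimal vectors of a well-rounded
lattice with a nearly orthogonal basis form a basis of the lattice. -/
theorem stmt_15 {n : ℕ} (b : Fin n → Evec n) (hb : LinearIndependent ℝ b)
    (hNO : NearlyOrth b) (hWR : IsWellRounded (latticeOf b))
    (x : Fin n → Evec n) (hx : ∀ i, x i ∈ minVecs (latticeOf b))
    (hxli : LinearIndependent ℝ x) :
    latticeOf x = latticeOf b :=
  stmt_15_general b hb hNO x hx hxli
end

section
/- Let n ≥ 2 and let L be a well-rounded lattice in ℝⁿ possessing a nearly orthogonal basis. Then C(L) = 1/2 if and only if |S(L)| > 2n. -/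
open scoped RealInnerProductSpace
open Submodule Metric MeasureTheory

/-! Let `H i` be the span of the basis vectors other than `b i`; near orthogonality says that the
projection of `b i` to `H i` has at most half its length. Writing a minimal vector as
`x = y + c i • b i` with `y ∈ H i`, this forces `|c i| = 1`, `‖b i‖ = ‖x‖`, and `y = 0` or `y`
minimal. With well-roundedness, `S(L)` therefore contains the `2n` vectors `±b i`, and any other
minimal vector `x` gives a triangle `x, y, x - y = ±b i` of minimal vectors, that is, two minimal
vectors at angle `π / 3`. Conversely such a pair gives a triangle of minimal vectors, which cannot
lie inside `{±b i}`. As `C(L) ≤ 1 / 2` for every lattice, `C(L) = 1 / 2` exactly when such a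
triangle exists. -/

section MinVecs

variable {n : ℕ}

theorem norm_eq_of_mem_minVecs_s16 {L : Set (Evec n)} {x y : Evec n} (hx : x ∈ minVecs L)
    (hy : y ∈ minVecs L) : ‖x‖ = ‖y‖ :=
  le_antisymm (hx.2.2 y hy.1 hy.2.1) (hy.2.2 x hx.1 hx.2.1)

theorem mem_minVecs_of_norm_le {L : Set (Evec n)} {x y : Evec n} (hx : x ∈ minVecs L)
    (hy : y ∈ L) (hy0 : y ≠ 0) (hyx : ‖y‖ ≤ ‖x‖) : y ∈ minVecs L :=
  ⟨hy, hy0, fun z hz hz0 => hyx.trans (hx.2.2 z hz hz0)⟩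

variable {L : AddSubgroup (Evec n)} {x y : Evec n}

theorem neg_mem_minVecs (hx : x ∈ minVecs L) : -x ∈ minVecs L :=
  mem_minVecs_of_norm_le hx (neg_mem hx.1) (neg_ne_zero.2 hx.2.1) (norm_neg x).le

theorem sub_mem_minVecs_iff (hx : x ∈ minVecs L) (hy : y ∈ minVecs L) :
    x - y ∈ minVecs L ↔ 2 * ⟪x, y⟫ = ‖x‖ ^ 2 := by
  have hnorm : ‖x - y‖ ^ 2 = 2 * ‖x‖ ^ 2 - 2 * ⟪x, y⟫ := by
    rw [norm_sub_sq_real, ← norm_eq_of_mem_minVecs_s16 hx hy]; ring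
  constructor
  · intro hxy
    rw [norm_eq_of_mem_minVecs_s16 hxy hx] at hnorm
    linarith
  · intro h
    have hxy : ‖x - y‖ = ‖x‖ :=
      (pow_left_inj₀ (norm_nonneg _) (norm_nonneg _) two_ne_zero).1 (by linarith)
    refine mem_minVecs_of_norm_le hx (sub_mem hx.1 hy.1) (fun h0 => ?_) hxy.le
    rw [h0, norm_zero, eq_comm, norm_eq_zero] at hxy
    exact hx.2.1 hxy

theorem two_mul_abs_inner_le_of_mem_minVecs (hx : x ∈ minVecs L) (hy : y ∈ minVecs L)
    (hxy : x ≠ y) (hxy' : x ≠ -y) : 2 * |⟪x, y⟫| ≤ ‖x‖ ^ 2 := by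
  have hsub : ‖x‖ ≤ ‖x - y‖ := hx.2.2 _ (sub_mem hx.1 hy.1) (sub_ne_zero.2 hxy)
  have hadd : ‖x‖ ≤ ‖x + y‖ :=
    hx.2.2 _ (add_mem hx.1 hy.1) (fun h => hxy' (eq_neg_of_add_eq_zero_left h))
  have hsub' := pow_le_pow_left₀ (norm_nonneg _) hsub 2
  have hadd' := pow_le_pow_left₀ (norm_nonneg _) hadd 2
  rw [norm_sub_sq_real, ← norm_eq_of_mem_minVecs_s16 hx hy] at hsub'
  rw [norm_add_sq_real, ← norm_eq_of_mem_minVecs_s16 hx hy] at hadd'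
  have : |⟪x, y⟫| ≤ ‖x‖ ^ 2 / 2 := abs_le.2 ⟨by linarith, by linarith⟩
  linarith

end MinVecs

section Coherence

variable {n : ℕ} {L : AddSubgroup (Evec n)}

theorem abs_inner_div_le_half_of_mem_minVecs {x y : Evec n} (hx : x ∈ minVecs L)
    (hy : y ∈ minVecs L) (hxy : x ≠ y) (hxy' : x ≠ -y) : |⟪x, y⟫| / (‖x‖ * ‖y‖) ≤ 1 / 2 := by
  have hx0 : 0 < ‖x‖ := norm_pos_iff.2 hx.2.1
  rw [← norm_eq_of_mem_minVecs_s16 hx hy, div_le_iff₀ (by positivity)]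
  nlinarith [two_mul_abs_inner_le_of_mem_minVecs hx hy hxy hxy']

theorem coherence_le_half (L : AddSubgroup (Evec n)) : coherence (L : Set (Evec n)) ≤ 1 / 2 :=
  Real.sSup_le (by
    rintro t ⟨x, hx, y, hy, hxy, hxy', rfl⟩
    exact abs_inner_div_le_half_of_mem_minVecs hx hy hxy hxy') (by norm_num)

theorem coherence_eq_half_iff (hfin : (minVecs (L : Set (Evec n))).Finite) :
    coherence (L : Set (Evec n)) = 1 / 2 ↔
      ∃ x ∈ minVecs (L : Set (Evec n)), ∃ y ∈ minVecs (L : Set (Evec n)),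
        x - y ∈ minVecs (L : Set (Evec n)) := by
  set S := minVecs (L : Set (Evec n))
  set T := {t | ∃ x ∈ S, ∃ y ∈ S, x ≠ y ∧ x ≠ -y ∧ t = |⟪x, y⟫| / (‖x‖ * ‖y‖)}
  change sSup T = 1 / 2 ↔ _
  constructor
  · intro hsup
    have hne : T.Nonempty := by
      rcases T.eq_empty_or_nonempty with h0 | h0
      · rw [h0, Real.sSup_empty] at hsup; norm_num at hsup
      · exact h0
    have hTfin : T.Finite :=
      ((hfin.prod hfin).image fun p : Evec n × Evec n => |⟪p.1, p.2⟫| / (‖p.1‖ * ‖p.2‖)).subset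
        (by rintro t ⟨x, hx, y, hy, -, -, rfl⟩; exact ⟨(x, y), ⟨hx, hy⟩, rfl⟩)
    obtain ⟨x, hx, y, hy, -, -, hval⟩ := hsup ▸ hne.csSup_mem hTfin
    have hx0 : ‖x‖ ≠ 0 := norm_ne_zero_iff.2 hx.2.1
    rw [← norm_eq_of_mem_minVecs_s16 hx hy, eq_div_iff (by positivity)] at hval
    rcases le_total 0 ⟪x, y⟫ with hpos | hneg
    · refine ⟨x, hx, y, hy, (sub_mem_minVecs_iff hx hy).2 ?_⟩
      rw [abs_of_nonneg hpos] at hval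
      linarith
    · refine ⟨x, hx, -y, neg_mem_minVecs hy, (sub_mem_minVecs_iff hx (neg_mem_minVecs hy)).2 ?_⟩
      rw [abs_of_nonpos hneg] at hval
      rw [inner_neg_right]
      linarith
  · rintro ⟨x, hx, y, hy, hxy⟩
    have hinner := (sub_mem_minVecs_iff hx hy).1 hxy
    have hx0 : 0 < ‖x‖ := norm_pos_iff.2 hx.2.1
    have hhalf : (1 / 2 : ℝ) ∈ T := by
      refine ⟨x, hx, y, hy, sub_ne_zero.1 hxy.2.1, ?_, ?_⟩
      · rintro rfl
        rw [inner_neg_left, real_inner_self_eq_norm_sq] at hinner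
        nlinarith
      · rw [← norm_eq_of_mem_minVecs_s16 hx hy, abs_of_nonneg (by nlinarith)]
        field_simp
        linarith
    refine le_antisymm (coherence_le_half L) (le_csSup ⟨1 / 2, ?_⟩ hhalf)
    rintro t ⟨x, hx, y, hy, hxy, hxy', rfl⟩
    exact abs_inner_div_le_half_of_mem_minVecs hx hy hxy hxy'

end Coherence

section Projection

variable {n : ℕ}

theorem norm_starProjection_le_half_of_le_subAngle {v : Evec n} {V : Submodule ℝ (Evec n)}
    (h : Real.pi / 3 ≤ subAngle v V) : ‖V.starProjection v‖ ≤ ‖v‖ / 2 := by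
  rcases eq_or_ne v 0 with rfl | hv
  · simp
  have hv0 : 0 < ‖v‖ := norm_pos_iff.2 hv
  set r := ‖V.starProjection v‖ / ‖v‖ with hr
  have hr0 : 0 ≤ r := by positivity
  have hr1 : r ≤ 1 := div_le_one_of_le₀ (V.norm_starProjection_apply_le v) hv0.le
  have hhalf : r ≤ 1 / 2 :=
    calc r = Real.cos (subAngle v V) := (Real.cos_arccos (by linarith) hr1).symm
      _ ≤ Real.cos (Real.pi / 3) :=
        Real.cos_le_cos_of_nonneg_of_le_pi (by positivity) (Real.arccos_le_pi _) h
      _ = 1 / 2 := Real.cos_pi_div_three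
  rw [hr, div_le_iff₀ hv0] at hhalf
  linarith

theorem NearlyOrth.norm_starProjection_le_half {b : Fin n → Evec n} (hNO : NearlyOrth b)
    (i : Fin n) : ‖(span ℝ (b '' {j | j ≠ i})).starProjection (b i)‖ ≤ ‖b i‖ / 2 := by
  obtain ⟨k, rfl⟩ : ∃ k, n = k + 1 := ⟨n - 1, by have := i.pos; omega⟩
  rcases Nat.eq_zero_or_pos k with rfl | hk
  · have hempty : {j : Fin 1 | j ≠ i} = ∅ := by
      ext j; simp [Subsingleton.elim j i]
    simp [hempty]
    positivity
  set σ := Equiv.swap i (Fin.last k)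
  have hbefore : {j | j < Fin.last k} = {Fin.last k}ᶜ := by
    ext j; simp [Fin.lt_last_iff_ne_last]
  have himage : (b ∘ σ) '' {j | j < Fin.last k} = b '' {j | j ≠ i} := by
    rw [Set.image_comp, hbefore, Set.image_compl_eq σ.bijective, Set.image_singleton,
      Equiv.swap_apply_right]
    rfl
  have h := hNO σ (Fin.last k) (by simpa using hk)
  rw [himage, Function.comp_apply, Equiv.swap_apply_right] at h
  exact norm_starProjection_le_half_of_le_subAngle h

end Projection

/-- Split `u = p + q` with `p ∈ K` and `q ⊥ K`. Then `‖y + t • u‖² = ‖y + t • p‖² + t² ‖q‖²`, where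
`‖q‖² ≥ ¾ ‖u‖²` and `‖y + t • p‖ ≥ ‖y‖ - |t| ‖u‖ / 2`; once `‖y + t • u‖ ≤ ‖y‖, ‖u‖`, this leaves
no room for `|t| > 1` or for strict inequalities. -/
theorem abs_eq_one_of_norm_add_smul_le {E : Type*} [NormedAddCommGroup E]
    [InnerProductSpace ℝ E] {K : Submodule ℝ E} [K.HasOrthogonalProjection] {u y : E} {t : ℝ}
    (hu : ‖K.starProjection u‖ ≤ ‖u‖ / 2) (hy : y ∈ K) (ht : 1 ≤ |t|) (hx0 : y + t • u ≠ 0)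
    (hxu : ‖y + t • u‖ ≤ ‖u‖) (hxy : ‖y + t • u‖ ≤ ‖y‖) :
    |t| = 1 ∧ ‖u‖ = ‖y + t • u‖ ∧ ‖y‖ = ‖y + t • u‖ := by
  set p := K.starProjection u
  set m := ‖y + t • u‖
  have hpK : p ∈ K := K.starProjection_apply_mem u
  have horth : ∀ w ∈ K, ⟪w, u - p⟫ = 0 := fun w hw => by
    rw [real_inner_comm]; exact K.starProjection_inner_eq_zero u w hw
  have hu_sq : ‖u‖ ^ 2 = ‖p‖ ^ 2 + ‖u - p‖ ^ 2 := by
    have h := norm_add_sq_eq_norm_sq_add_norm_sq_real (horth p hpK)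
    rw [add_sub_cancel] at h
    nlinarith
  have hx_sq : m ^ 2 = ‖y + t • p‖ ^ 2 + |t| ^ 2 * ‖u - p‖ ^ 2 := by
    have hsplit : y + t • u = (y + t • p) + t • (u - p) := by rw [smul_sub]; abel
    have h := norm_add_sq_eq_norm_sq_add_norm_sq_real
      (by rw [inner_smul_right, horth _ (add_mem hy (K.smul_mem t hpK)), mul_zero] :
        ⟪y + t • p, t • (u - p)⟫ = 0)
    rw [← hsplit, norm_smul, Real.norm_eq_abs] at h
    nlinarith
  have htri : ‖y‖ ≤ ‖y + t • p‖ + |t| * ‖p‖ :=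
    calc ‖y‖ = ‖(y + t • p) - t • p‖ := by rw [add_sub_cancel_right]
      _ ≤ ‖y + t • p‖ + ‖t • p‖ := norm_sub_le _ _
      _ = ‖y + t • p‖ + |t| * ‖p‖ := by rw [norm_smul, Real.norm_eq_abs]
  have hm0 : 0 < m := norm_pos_iff.2 hx0
  have hP := norm_nonneg p
  have hF := norm_nonneg (y + t • p)
  have hq_sq : 3 / 4 * ‖u‖ ^ 2 ≤ ‖u - p‖ ^ 2 := by nlinarith
  have hm_le : m ≤ |t| * ‖u‖ := by nlinarith
  have htP : |t| * ‖p‖ ≤ |t| * ‖u‖ / 2 := by nlinarith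
  have hm_sq : ‖y + t • p‖ ^ 2 + 3 / 4 * (|t| * ‖u‖) ^ 2 ≤ m ^ 2 := by
    nlinarith [mul_le_mul_of_nonneg_left hq_sq (sq_nonneg |t|)]
  have hlt : |t| * ‖u‖ < 2 * m := by nlinarith
  have hF_sq : (m - |t| * ‖u‖ / 2) ^ 2 ≤ ‖y + t • p‖ ^ 2 :=
    pow_le_pow_left₀ (by linarith) (by linarith) 2
  have hs : |t| * ‖u‖ = m := le_antisymm (by nlinarith) hm_le
  have ht1 : |t| = 1 := le_antisymm (by nlinarith) ht
  rw [ht1, one_mul] at hs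
  refine ⟨ht1, hs, le_antisymm ?_ hxy⟩
  have hF_le : ‖y + t • p‖ ≤ m / 2 := by nlinarith
  rw [ht1, one_mul] at htri
  linarith

theorem LinearIndependent.exists_linearMap_eq_one {K V ι : Type*} [DivisionRing K]
    [AddCommGroup V] [Module K V] {b : ι → V} (hb : LinearIndependent K b) :
    ∃ f : V →ₗ[K] K, ∀ i, f (b i) = 1 := by
  set B := Module.Basis.extend hb.linearIndepOn_id
  refine ⟨B.sumCoords, fun i => ?_⟩
  have := B.sumCoords_self_apply ⟨b i, hb.linearIndepOn_id.subset_extend _ ⟨i, rfl⟩⟩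
  simpa [B] using this

section SignedBasis

variable {M ι : Type*} [AddCommGroup M] {b : ι → M}

def signedBasis (b : ι → M) : Set M := Set.range b ∪ Set.range (-b)

theorem zsmul_mem_signedBasis {c : ℤ} (hc : |c| = 1) (i : ι) : c • b i ∈ signedBasis b := by
  rcases (abs_eq zero_le_one).1 hc with rfl | rfl
  · exact Or.inl ⟨i, (one_zsmul _).symm⟩
  · exact Or.inr ⟨i, (neg_one_zsmul _).symm⟩

variable [Module ℝ M]

theorem map_eq_one_or_neg_one_of_mem_signedBasis {f : M →ₗ[ℝ] ℝ} (hf : ∀ i, f (b i) = 1)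
    {x : M} (hx : x ∈ signedBasis b) : f x = 1 ∨ f x = -1 := by
  rcases hx with ⟨i, rfl⟩ | ⟨i, rfl⟩
  · exact Or.inl (hf i)
  · exact Or.inr (by rw [Pi.neg_apply, map_neg, hf])

/-- A functional equal to `1` on `b` takes the odd values `±1` on `signedBasis b` but an even
value on a difference of two of its elements. -/
theorem sub_notMem_signedBasis {f : M →ₗ[ℝ] ℝ} (hf : ∀ i, f (b i) = 1) {x y : M}
    (hx : x ∈ signedBasis b) (hy : y ∈ signedBasis b) : x - y ∉ signedBasis b := by
  intro hxy
  have h := map_eq_one_or_neg_one_of_mem_signedBasis hf hxy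
  rw [map_sub] at h
  rcases map_eq_one_or_neg_one_of_mem_signedBasis hf hx with h1 | h1 <;>
    rcases map_eq_one_or_neg_one_of_mem_signedBasis hf hy with h2 | h2 <;>
    · rw [h1, h2] at h; norm_num at h

theorem ncard_signedBasis [Finite ι] (hb : Function.Injective b) {f : M →ₗ[ℝ] ℝ}
    (hf : ∀ i, f (b i) = 1) : (signedBasis b).ncard = 2 * Nat.card ι := by
  have hdisj : Disjoint (Set.range b) (Set.range (-b)) := by
    refine Set.disjoint_left.2 ?_
    rintro _ ⟨i, rfl⟩ ⟨j, hj⟩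
    have := congrArg f hj
    rw [Pi.neg_apply, map_neg, hf, hf] at this
    norm_num at this
  rw [signedBasis, Set.ncard_union_eq hdisj, Set.ncard_range_of_injective hb,
    Set.ncard_range_of_injective (f := -b) (neg_injective.comp hb), two_mul]

end SignedBasis

section Lattice

variable {n : ℕ} {b : Fin n → Evec n}

def lattice (b : Fin n → Evec n) : AddSubgroup (Evec n) := (span ℤ (Set.range b)).toAddSubgroup

theorem coe_lattice (b : Fin n → Evec n) : (lattice b : Set (Evec n)) = latticeOf b := by
  ext x
  simp only [lattice, latticeOf, coe_toAddSubgroup, SetLike.mem_coe,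
    mem_span_range_iff_exists_fun, Int.cast_smul_eq_zsmul, Set.mem_ofPred_eq, eq_comm]

theorem exists_sum_eq_of_mem_lattice {x : Evec n} (hx : x ∈ lattice b) :
    ∃ c : Fin n → ℤ, ∑ j, c j • b j = x :=
  (mem_span_range_iff_exists_fun ℤ).1 hx

theorem sum_zsmul_sub_mem_span (c : Fin n → ℤ) (i : Fin n) :
    ∑ j, c j • b j - c i • b i ∈ span ℝ (b '' {j | j ≠ i}) := by
  rw [← Finset.sum_erase_eq_sub (Finset.mem_univ i)]
  exact sum_mem fun j hj =>
    zsmul_mem (subset_span (Set.mem_image_of_mem b (Finset.ne_of_mem_erase hj))) _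

theorem abs_coeff_eq_one_of_mem_minVecs {i : Fin n} (hbi : b i ≠ 0)
    (hproj : ‖(span ℝ (b '' {j | j ≠ i})).starProjection (b i)‖ ≤ ‖b i‖ / 2) {x : Evec n}
    (hx : x ∈ minVecs (lattice b : Set (Evec n))) {c : Fin n → ℤ} (hc : ∑ j, c j • b j = x)
    (hci : c i ≠ 0) :
    |c i| = 1 ∧ b i ∈ minVecs (lattice b : Set (Evec n)) ∧
      (x = c i • b i ∨ x - c i • b i ∈ minVecs (lattice b : Set (Evec n))) := by
  have hbL : b i ∈ lattice b := subset_span (Set.mem_range_self (f := b) i)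
  have hxb : ‖x‖ ≤ ‖b i‖ := hx.2.2 _ hbL hbi
  have hc1 : (1 : ℝ) ≤ |(c i : ℝ)| := by exact_mod_cast Int.one_le_abs hci
  rcases eq_or_ne (x - c i • b i) 0 with hy0 | hy0
  · have hxc : x = c i • b i := sub_eq_zero.1 hy0
    have hnorm : ‖x‖ = |(c i : ℝ)| * ‖b i‖ := by
      rw [hxc, ← Int.cast_smul_eq_zsmul ℝ, norm_smul, Real.norm_eq_abs]
    have hb0 : 0 < ‖b i‖ := norm_pos_iff.2 hbi
    have ht : |(c i : ℝ)| = 1 := le_antisymm (by nlinarith) hc1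
    refine ⟨by exact_mod_cast ht, mem_minVecs_of_norm_le hx hbL hbi ?_, Or.inl hxc⟩
    rw [hnorm, ht, one_mul]
  · have hyL : x - c i • b i ∈ lattice b := sub_mem hx.1 (zsmul_mem hbL _)
    have hyK := hc ▸ sum_zsmul_sub_mem_span c i
    have hsum : x - c i • b i + (c i : ℝ) • b i = x := by
      rw [Int.cast_smul_eq_zsmul, sub_add_cancel]
    obtain ⟨ht, hbx, hyx⟩ := abs_eq_one_of_norm_add_smul_le hproj hyK hc1
      (by rw [hsum]; exact hx.2.1) (by rw [hsum]; exact hxb)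
      (by rw [hsum]; exact hx.2.2 _ hyL hy0)
    rw [hsum] at hbx hyx
    exact ⟨by exact_mod_cast ht, mem_minVecs_of_norm_le hx hbL hbi hbx.le,
      Or.inr (mem_minVecs_of_norm_le hx hyL hy0 hyx.le)⟩

variable (hproj : ∀ i, ‖(span ℝ (b '' {j | j ≠ i})).starProjection (b i)‖ ≤ ‖b i‖ / 2)
include hproj

theorem minVecs_lattice_finite (hb0 : ∀ i, b i ≠ 0) :
    (minVecs (lattice b : Set (Evec n))).Finite := by
  refine ((Set.finite_Icc (-1 : Fin n → ℤ) 1).image fun c => ∑ j, c j • b j).subset ?_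
  intro x hx
  obtain ⟨c, hc⟩ := exists_sum_eq_of_mem_lattice hx.1
  have hc1 : ∀ j, |c j| ≤ 1 := fun j => by
    rcases eq_or_ne (c j) 0 with h | h
    · simp [h]
    · exact (abs_coeff_eq_one_of_mem_minVecs (hb0 j) (hproj j) hx hc h).1.le
  exact ⟨c, ⟨fun j => (abs_le.1 (hc1 j)).1, fun j => (abs_le.1 (hc1 j)).2⟩, hc⟩

variable (hb : LinearIndependent ℝ b) (hWR : IsWellRounded (lattice b : Set (Evec n)))
include hb hWR

theorem signedBasis_subset_minVecs : signedBasis b ⊆ minVecs (lattice b : Set (Evec n)) := by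
  have hmem : ∀ i, b i ∈ minVecs (lattice b : Set (Evec n)) := by
    intro i
    obtain ⟨x, hx, hxV⟩ : ∃ x ∈ minVecs (lattice b : Set (Evec n)),
        x ∉ span ℝ (b '' {j | j ≠ i}) := by
      by_contra! h
      have htop := span_le.2 h
      rw [hWR, top_le_iff] at htop
      exact hb.notMem_span_image (s := {j | j ≠ i}) (x := i) (by simp)
        (by rw [htop]; exact mem_top)
    obtain ⟨c, hc⟩ := exists_sum_eq_of_mem_lattice hx.1
    have hci : c i ≠ 0 := by
      intro h0
      have hmem := sum_zsmul_sub_mem_span (b := b) c i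
      rw [hc, h0, zero_smul, sub_zero] at hmem
      exact hxV hmem
    exact (abs_coeff_eq_one_of_mem_minVecs (hb.ne_zero i) (hproj i) hx hc hci).2.1
  rintro _ (⟨i, rfl⟩ | ⟨i, rfl⟩)
  · exact hmem i
  · exact neg_mem_minVecs (hmem i)

theorem exists_sub_mem_minVecs_iff :
    (∃ x ∈ minVecs (lattice b : Set (Evec n)), ∃ y ∈ minVecs (lattice b : Set (Evec n)),
      x - y ∈ minVecs (lattice b : Set (Evec n))) ↔
      ∃ x ∈ minVecs (lattice b : Set (Evec n)), x ∉ signedBasis b := by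
  obtain ⟨f, hf⟩ := hb.exists_linearMap_eq_one
  constructor
  · rintro ⟨x, hx, y, hy, hxy⟩
    by_contra! h
    exact sub_notMem_signedBasis hf (h x hx) (h y hy) (h _ hxy)
  · rintro ⟨x, hx, hxb⟩
    obtain ⟨c, hc⟩ := exists_sum_eq_of_mem_lattice hx.1
    obtain ⟨i, hci⟩ : ∃ i, c i ≠ 0 := by
      by_contra! h
      exact hx.2.1 (by simp [← hc, h])
    obtain ⟨hc1, -, hxy⟩ := abs_coeff_eq_one_of_mem_minVecs (hb.ne_zero i) (hproj i) hx hc hci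
    have hsb := zsmul_mem_signedBasis (b := b) hc1 i
    refine ⟨x, hx, x - c i • b i, hxy.resolve_left fun h => hxb (h ▸ hsb), ?_⟩
    rw [sub_sub_cancel]
    exact signedBasis_subset_minVecs hproj hb hWR hsb

end Lattice

theorem stmt_16_general {n : ℕ} (b : Fin n → Evec n)
    (hb : LinearIndependent ℝ b) (hNO : NearlyOrth b)
    (hWR : IsWellRounded (latticeOf b)) :
    coherence (latticeOf b) = 1 / 2 ↔ 2 * n < (minVecs (latticeOf b)).ncard := by
  have hproj := hNO.norm_starProjection_le_half
  rw [← coe_lattice] at hWR ⊢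
  have hfin := minVecs_lattice_finite hproj hb.ne_zero
  have hsub := signedBasis_subset_minVecs hproj hb hWR
  obtain ⟨f, hf⟩ := hb.exists_linearMap_eq_one
  have hcard : (signedBasis b).ncard = 2 * n := by
    rw [ncard_signedBasis hb.injective hf, Nat.card_eq_fintype_card, Fintype.card_fin]
  rw [coherence_eq_half_iff hfin, exists_sub_mem_minVecs_iff hproj hb hWR, ← hcard]
  constructor
  · rintro ⟨x, hx, hxb⟩
    exact Set.ncard_lt_ncard (Set.ssubset_iff_exists.2 ⟨hsub, x, hx, hxb⟩) hfin
  · intro hlt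
    exact (Set.ssubset_iff_exists.1 (hsub.ssubset_of_ne fun h => hlt.ne (congrArg _ h))).2

/-- for a well-rounded lattice with a nearly orthogonal basis,
`C(L) = 1/2` iff `|S(L)| > 2n`. -/
theorem stmt_16 {n : ℕ} (hn : 2 ≤ n) (b : Fin n → Evec n)
    (hb : LinearIndependent ℝ b) (hNO : NearlyOrth b)
    (hWR : IsWellRounded (latticeOf b)) :
    coherence (latticeOf b) = 1 / 2 ↔ 2 * n < (minVecs (latticeOf b)).ncard :=
  stmt_16_general b hb hNO hWR
end

section
/- Let n ≥ 2 and let B = {b₁,…,bₙ} be linearly independent unit vectors in ℝⁿ such that max_{1 ≤ i < j ≤ n} |⟨bᵢ,bⱼ⟩| ≤ c_n, where c_n = (√((n−2)² + 16(n−1)) − (n−2)) / (8(n−1)). Then the lattice L = span_ℤ B is well-rounded and B is a nearly orthogonal basis of L (in particular, L ∈ W*_n). -/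
open scoped RealInnerProductSpace
open Submodule Metric MeasureTheory

/-! Let `c = c_n`, the positive root of `4 (n - 1) c² + (n - 2) c = 1`; then `c n ≤ 1`.
Expanding the Gram form, every combination `x = ∑ aᵢ bᵢ` satisfies
`‖x‖² ≥ (1 + c) ∑ aᵢ² - c (∑ |aᵢ|)²`. For a nonzero integer vector `a` we have
`∑ |aᵢ| ≤ ∑ aᵢ²` and `(∑ |aᵢ|)² ≤ n ∑ aᵢ²`, which makes the right side at least `1`, so every `bᵢ`
is a minimal vector (the same bound for real `a` shows that the `bᵢ` are linearly independent).
If `p = ∑ aᵢ bᵢ` is the projection of `b_m` onto the span of at most `n - 1` other basis vectors,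
then `‖p‖² = ⟪b_m, p⟫ ≤ c ∑ |aᵢ|`; together with the Gram bound and the equation for `c` this
forces `‖p‖² ≤ 1/4`, i.e. the angle between `b_m` and that span is at least `π / 3`. -/

section NearlyOrthonormal

variable {ι E : Type*} [NormedAddCommGroup E] [InnerProductSpace ℝ E] {b : ι → E} {c : ℝ}

theorem norm_sum_smul_sq_eq (b : ι → E) (s : Finset ι) (a : ι → ℝ) :
    ‖∑ i ∈ s, a i • b i‖ ^ 2 = ∑ i ∈ s, ∑ j ∈ s, a i * a j * ⟪b i, b j⟫ := by
  simp_rw [← real_inner_self_eq_norm_sq, sum_inner, inner_sum, real_inner_smul_left,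
    real_inner_smul_right, mul_assoc]

theorem one_add_mul_sum_sq_sub_le_norm_sum_smul_sq (hunit : ∀ i, ‖b i‖ = 1)
    (hcoh : ∀ i j, i ≠ j → |⟪b i, b j⟫| ≤ c) (s : Finset ι) (a : ι → ℝ) :
    (1 + c) * ∑ i ∈ s, a i ^ 2 - c * (∑ i ∈ s, |a i|) ^ 2 ≤ ‖∑ i ∈ s, a i • b i‖ ^ 2 := by
  classical
  have hterm : ∀ i j, (if i = j then (1 + c) * a i ^ 2 else 0) - c * (|a i| * |a j|)
      ≤ a i * a j * ⟪b i, b j⟫ := by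
    intro i j
    split_ifs with hij
    · rw [hij, real_inner_self_eq_norm_sq, hunit, abs_mul_abs_self]
      exact le_of_eq (by ring)
    · calc 0 - c * (|a i| * |a j|) ≤ -(|a i| * |a j| * |⟪b i, b j⟫|) := by
            nlinarith [hcoh i j hij, mul_nonneg (abs_nonneg (a i)) (abs_nonneg (a j))]
        _ = -|a i * a j * ⟪b i, b j⟫| := by rw [abs_mul, abs_mul]
        _ ≤ a i * a j * ⟪b i, b j⟫ := neg_abs_le _
  calc (1 + c) * ∑ i ∈ s, a i ^ 2 - c * (∑ i ∈ s, |a i|) ^ 2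
      = ∑ i ∈ s, ∑ j ∈ s, ((if i = j then (1 + c) * a i ^ 2 else 0) - c * (|a i| * |a j|)) := by
        rw [sq (∑ i ∈ s, |a i|), Finset.sum_mul_sum, Finset.mul_sum, Finset.mul_sum,
          ← Finset.sum_sub_distrib]
        refine Finset.sum_congr rfl fun i hi => ?_
        rw [Finset.sum_sub_distrib, Finset.sum_ite_eq, if_pos hi, Finset.mul_sum]
    _ ≤ ∑ i ∈ s, ∑ j ∈ s, a i * a j * ⟪b i, b j⟫ := by gcongr with i _ j _; exact hterm i j
    _ = ‖∑ i ∈ s, a i • b i‖ ^ 2 := (norm_sum_smul_sq_eq b s a).symm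

theorem sq_sum_abs_le_card_mul_sum_sq (s : Finset ι) (a : ι → ℝ) :
    (∑ i ∈ s, |a i|) ^ 2 ≤ s.card * ∑ i ∈ s, a i ^ 2 := by
  simpa only [sq_abs] using sq_sum_le_card_mul_sum_sq (s := s) (f := fun i => |a i|)

theorem linearIndependent_of_abs_inner_le [Fintype ι] (hunit : ∀ i, ‖b i‖ = 1)
    (hcoh : ∀ i j, i ≠ j → |⟪b i, b j⟫| ≤ c) (hc0 : 0 ≤ c)
    (hc : c * (Fintype.card ι - 1) < 1) : LinearIndependent ℝ b := by
  refine Fintype.linearIndependent_iff.mpr fun a ha => ?_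
  have hlower := one_add_mul_sum_sq_sub_le_norm_sum_smul_sq hunit hcoh Finset.univ a
  have hCS := mul_le_mul_of_nonneg_left (sq_sum_abs_le_card_mul_sum_sq Finset.univ a) hc0
  rw [ha, norm_zero] at hlower
  rw [Finset.card_univ] at hCS
  have hS : ∑ i, a i ^ 2 = 0 := by
    nlinarith [Finset.sum_nonneg fun i (_ : i ∈ Finset.univ) => sq_nonneg (a i)]
  intro i
  exact pow_eq_zero_iff two_ne_zero |>.mp <|
    (Finset.sum_eq_zero_iff_of_nonneg fun j _ => sq_nonneg (a j)).mp hS i (Finset.mem_univ i)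

theorem one_le_norm_sum_intCast_smul [Fintype ι] (hunit : ∀ i, ‖b i‖ = 1)
    (hcoh : ∀ i j, i ≠ j → |⟪b i, b j⟫| ≤ c) (hc0 : 0 ≤ c) (hc : c * Fintype.card ι ≤ 1)
    {d : ι → ℤ} (hd : d ≠ 0) : 1 ≤ ‖∑ i, (d i : ℝ) • b i‖ := by
  obtain ⟨j, hj⟩ := Function.ne_iff.mp hd
  set N : ℝ := (Fintype.card ι : ℝ)
  set S := ∑ i, (d i : ℝ) ^ 2
  set T := ∑ i, |(d i : ℝ)|
  have hN : 1 ≤ N := Nat.one_le_cast.mpr (Fintype.card_pos_iff.mpr ⟨j⟩)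
  have habs_le_sq : ∀ i, |(d i : ℝ)| ≤ (d i : ℝ) ^ 2 := fun i => by
    exact_mod_cast Int.natCast_natAbs (d i) ▸ Int.natAbs_le_self_sq (d i)
  have hS : 1 ≤ S := by
    have hdj : (1 : ℝ) ≤ |(d j : ℝ)| := by exact_mod_cast Int.one_le_abs hj
    exact (hdj.trans (habs_le_sq j)).trans
      (Finset.single_le_sum (fun i _ => sq_nonneg (d i : ℝ)) (Finset.mem_univ j))
  have hT0 : 0 ≤ T := Finset.sum_nonneg fun i _ => abs_nonneg _
  have hTS : T ≤ S := Finset.sum_le_sum fun i _ => habs_le_sq i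
  have hCS : c * T ^ 2 ≤ c * (N * S) := mul_le_mul_of_nonneg_left
    (by simpa using sq_sum_abs_le_card_mul_sum_sq Finset.univ fun i => (d i : ℝ)) hc0
  have hlower := one_add_mul_sum_sq_sub_le_norm_sum_smul_sq hunit hcoh Finset.univ fun i => (d i : ℝ)
  -- `c T² ≤ c S min(S, N)`, and `(1 + c) S - c S min(S, N) - 1` factors as
  -- `(S - 1)(1 - c S)` when `S ≤ N`, and is at least `(N - 1)(1 - c N)` when `N ≤ S`.
  have key : 1 ≤ (1 + c) * S - c * T ^ 2 := by
    rcases le_total S N with hSN | hNS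
    · nlinarith [mul_nonneg (sub_nonneg.mpr hS) (by nlinarith : 0 ≤ 1 - c * S),
        mul_le_mul_of_nonneg_left (pow_le_pow_left₀ hT0 hTS 2) hc0]
    · nlinarith [mul_nonneg (sub_nonneg.mpr hN) (sub_nonneg.mpr hc),
        mul_nonneg (sub_nonneg.mpr hNS) (by linarith : 0 ≤ 1 + c - c * N)]
  nlinarith [norm_nonneg (∑ i, (d i : ℝ) • b i)]

theorem le_one_div_four_of_le_mul_of_mul_sq_le {c k N P T : ℝ} (hc0 : 0 ≤ c) (hk : 1 ≤ k)
    (hkN : k ≤ N - 1) (hc : 4 * (N - 1) * c ^ 2 + (N - 2) * c ≤ 1) (hP : 0 ≤ P)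
    (hPT : P ≤ c * T) (hTP : (1 - (k - 1) * c) * T ^ 2 ≤ k * P) : P ≤ 1 / 4 := by
  have hcoef : 4 * (N - 1) * c ^ 2 ≤ 1 - (k - 1) * c := by
    nlinarith [mul_le_mul_of_nonneg_right hkN hc0]
  have hP2 : P ^ 2 ≤ c ^ 2 * T ^ 2 := by
    rw [← mul_pow]; exact pow_le_pow_left₀ hP hPT 2
  have hquad : (N - 1) * (4 * P ^ 2) ≤ (N - 1) * P := calc
    (N - 1) * (4 * P ^ 2) ≤ 4 * (N - 1) * c ^ 2 * T ^ 2 := by nlinarith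
    _ ≤ (1 - (k - 1) * c) * T ^ 2 := mul_le_mul_of_nonneg_right hcoef (sq_nonneg T)
    _ ≤ k * P := hTP
    _ ≤ (N - 1) * P := mul_le_mul_of_nonneg_right hkN hP
  nlinarith [le_of_mul_le_mul_left hquad (by linarith : 0 < N - 1)]

theorem inner_sum_smul_le_mul_sum_abs (hcoh : ∀ i j, i ≠ j → |⟪b i, b j⟫| ≤ c)
    {s : Finset ι} {m : ι} (hm : m ∉ s) (a : ι → ℝ) :
    ⟪b m, ∑ j ∈ s, a j • b j⟫ ≤ c * ∑ j ∈ s, |a j| := by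
  rw [inner_sum, Finset.mul_sum]
  refine Finset.sum_le_sum fun j hj => ?_
  rw [real_inner_smul_right, mul_comm c]
  calc a j * ⟪b m, b j⟫ ≤ |a j| * |⟪b m, b j⟫| := (le_abs_self _).trans (abs_mul _ _).le
    _ ≤ |a j| * c := by gcongr; exact hcoh m j fun h => hm (h ▸ hj)

theorem norm_orthogonalProjectionOnto_le_half [Fintype ι] (hunit : ∀ i, ‖b i‖ = 1)
    (hcoh : ∀ i j, i ≠ j → |⟪b i, b j⟫| ≤ c) (hc0 : 0 ≤ c)
    (hc : 4 * (Fintype.card ι - 1) * c ^ 2 + (Fintype.card ι - 2) * c ≤ 1)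
    {s : Finset ι} {m : ι} (hm : m ∉ s) {K : Submodule ℝ E} [K.HasOrthogonalProjection]
    (hK : K ≤ span ℝ (b '' s)) : ‖(K.orthogonalProjectionOnto (b m) : E)‖ ≤ 1 / 2 := by
  set p : E := (K.orthogonalProjectionOnto (b m) : E)
  have hpm : ⟪b m, p⟫ = ‖p‖ ^ 2 := by
    rw [← real_inner_self_eq_norm_sq, ← K.coe_inner, inner_orthogonalProjectionOnto_eq_of_mem_right]
  obtain ⟨a, hap⟩ : ∃ a : ι → ℝ, ∑ i ∈ s, a i • b i = p :=
    (mem_span_image_finset_iff_exists_fun' ℝ).mp (hK (K.orthogonalProjectionOnto (b m)).2)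
  set k : ℝ := (s.card : ℝ)
  set N : ℝ := (Fintype.card ι : ℝ)
  set P := ‖p‖ ^ 2
  set A := ∑ i ∈ s, a i ^ 2
  set T := ∑ i ∈ s, |a i|
  have hkN : k ≤ N - 1 := by
    have := Finset.card_lt_univ_of_notMem hm
    simp only [k, N, le_sub_iff_add_le]
    exact_mod_cast this
  have hupper : P ≤ c * T := hpm ▸ hap ▸ inner_sum_smul_le_mul_sum_abs hcoh hm a
  have hlower : (1 + c) * A - c * T ^ 2 ≤ P := by
    simpa only [P, hap] using one_add_mul_sum_sq_sub_le_norm_sum_smul_sq hunit hcoh s a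
  have hCS : T ^ 2 ≤ k * A := sq_sum_abs_le_card_mul_sum_sq s a
  have hP : P ≤ 1 / 4 := by
    rcases s.eq_empty_or_nonempty with rfl | hs
    · simp only [T, Finset.sum_empty, mul_zero] at hupper
      linarith
    refine le_one_div_four_of_le_mul_of_mul_sq_le hc0 (Nat.one_le_cast.mpr hs.card_pos) hkN hc
      (sq_nonneg ‖p‖) hupper ?_
    -- `k P ≥ k ((1 + c) A - c T²) ≥ (1 + c) T² - k c T²`, using `T² ≤ k A`.
    nlinarith [mul_le_mul_of_nonneg_left hlower (by positivity : (0 : ℝ) ≤ k),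
      mul_le_mul_of_nonneg_left hCS (by linarith : (0 : ℝ) ≤ 1 + c)]
  nlinarith [norm_nonneg p]

end NearlyOrthonormal

noncomputable def coherenceBound (N : ℝ) : ℝ :=
  (Real.sqrt ((N - 2) ^ 2 + 16 * (N - 1)) - (N - 2)) / (8 * (N - 1))

section CoherenceBound

variable {N : ℝ}

theorem coherenceBound_pos (hN : 2 ≤ N) : 0 < coherenceBound N := by
  have hlt : N - 2 < Real.sqrt ((N - 2) ^ 2 + 16 * (N - 1)) :=
    Real.lt_sqrt_of_sq_lt (by nlinarith)
  exact div_pos (by linarith) (by linarith)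

theorem coherenceBound_quadratic (hN : 2 ≤ N) :
    4 * (N - 1) * coherenceBound N ^ 2 + (N - 2) * coherenceBound N = 1 := by
  have hs := Real.sq_sqrt (by nlinarith : (0 : ℝ) ≤ (N - 2) ^ 2 + 16 * (N - 1))
  have hN1 : N - 1 ≠ 0 := by linarith
  rw [coherenceBound]
  set r := Real.sqrt ((N - 2) ^ 2 + 16 * (N - 1))
  field_simp
  linear_combination 4 * hs

theorem coherenceBound_mul_le_one (hN : 2 ≤ N) : coherenceBound N * N ≤ 1 := by
  have hc := coherenceBound_pos hN
  nlinarith [coherenceBound_quadratic hN]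

end CoherenceBound

section Lattice

variable {n : ℕ} {b : Fin n → Evec n}

theorem mem_latticeOf (b : Fin n → Evec n) (i : Fin n) : b i ∈ latticeOf b :=
  ⟨Pi.single i 1, by simp [Pi.single_apply, ite_smul]⟩

theorem mem_minVecs_latticeOf {i : Fin n} (hi : b i ≠ 0)
    (hmin : ∀ d : Fin n → ℤ, d ≠ 0 → ‖b i‖ ≤ ‖∑ j, (d j : ℝ) • b j‖) :
    b i ∈ minVecs (latticeOf b) := by
  refine ⟨mem_latticeOf b i, hi, ?_⟩
  rintro _ ⟨d, rfl⟩ hy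
  exact hmin d (by rintro rfl; simp at hy)

theorem isWellRounded_latticeOf (hb : LinearIndependent ℝ b)
    (hmin : ∀ i, b i ∈ minVecs (latticeOf b)) : IsWellRounded (latticeOf b) := by
  rw [IsWellRounded, eq_top_iff, ← hb.span_eq_top_of_card_eq_finrank' (by simp)]
  exact span_mono (Set.range_subset_iff.mpr hmin)

theorem pi_div_three_le_subAngle {v : Evec n} {V : Submodule ℝ (Evec n)} (hv : ‖v‖ = 1)
    (hV : ‖(V.orthogonalProjectionOnto v : Evec n)‖ ≤ 1 / 2) : Real.pi / 3 ≤ subAngle v V := by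
  rw [subAngle, hv, div_one]
  calc Real.pi / 3 = Real.arccos (1 / 2) := by
        rw [← Real.cos_pi_div_three, Real.arccos_cos (by positivity) (by linarith [Real.pi_pos])]
    _ ≤ _ := Real.arccos_le_arccos hV

theorem nearlyOrth_of_norm_orthogonalProjectionOnto_le_half (hunit : ∀ i, ‖b i‖ = 1)
    (hproj : ∀ (s : Finset (Fin n)) (m : Fin n), m ∉ s →
      ‖((span ℝ (b '' s)).orthogonalProjectionOnto (b m) : Evec n)‖ ≤ 1 / 2) :
    NearlyOrth b := by
  intro σ i _
  have himage : (b ∘ σ) '' {j | j < i} = b '' ↑((Finset.Iio i).image σ) := by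
    rw [Set.image_comp, Finset.coe_image, Finset.coe_Iio]
    rfl
  rw [himage]
  exact pi_div_three_le_subAngle (hunit _) (hproj _ _ (by simp))

end Lattice

theorem stmt_17_general {n : ℕ} (hn : 2 ≤ n) (b : Fin n → Evec n)
    (hunit : ∀ i, ‖b i‖ = 1)
    (hcoh : ∀ i j : Fin n, i ≠ j → |⟪b i, b j⟫| ≤
      (Real.sqrt (((n : ℝ) - 2) ^ 2 + 16 * ((n : ℝ) - 1)) - ((n : ℝ) - 2)) /
        (8 * ((n : ℝ) - 1))) :
    IsWellRounded (latticeOf b) ∧ NearlyOrth b := by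
  replace hcoh : ∀ i j, i ≠ j → |⟪b i, b j⟫| ≤ coherenceBound n := hcoh
  have hN : (2 : ℝ) ≤ n := by exact_mod_cast hn
  have hc := coherenceBound_pos hN
  have hcn : coherenceBound n * Fintype.card (Fin n) ≤ 1 := by
    simpa using coherenceBound_mul_le_one hN
  have hb : LinearIndependent ℝ b :=
    linearIndependent_of_abs_inner_le hunit hcoh hc.le (by linarith)
  refine ⟨isWellRounded_latticeOf hb fun i => mem_minVecs_latticeOf (hb.ne_zero i) fun d hd => ?_,
    nearlyOrth_of_norm_orthogonalProjectionOnto_le_half hunit fun s m hm =>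
      norm_orthogonalProjectionOnto_le_half hunit hcoh hc.le ?_ hm le_rfl⟩
  · rw [hunit]
    exact one_le_norm_sum_intCast_smul hunit hcoh hc.le hcn hd
  · simpa using (coherenceBound_quadratic hN).le

/-- unit vectors with pairwise inner products bounded by `c_n`
span a well-rounded lattice for which they form a nearly orthogonal basis. -/
theorem stmt_17 {n : ℕ} (hn : 2 ≤ n) (b : Fin n → Evec n)
    (hb : LinearIndependent ℝ b) (hunit : ∀ i, ‖b i‖ = 1)
    (hcoh : ∀ i j : Fin n, i ≠ j → |⟪b i, b j⟫| ≤
      (Real.sqrt (((n : ℝ) - 2) ^ 2 + 16 * ((n : ℝ) - 1)) - ((n : ℝ) - 2)) /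
        (8 * ((n : ℝ) - 1))) :
    IsWellRounded (latticeOf b) ∧ NearlyOrth b :=
  stmt_17_general hn b hunit hcoh
end
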